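/- arXiv:math/0607418 — 6 statements merged into one kernel-verified Lean document; each statement's English description precedes it below -/
import Mathlib

section
/- Let A be a Noetherian commutative ring and M an A-module. Then M is injective if and only if for every finite family f_1,...,f_m of elements of A and u_1,...,u_m of elements of M such that for all t_1,...,t_m in A, (∑ t_i f_i = 0 implies ∑ t_i u_i = 0), there exists v in M with f_i v = u_i for all i. -/
universe w

section SmallLemmas

variable {R : Type*} {V : Type*} [CommRing R] [AddCommGroup V] [Module R V]

lemma my_mk_out {P : Submodule R V} (x : V ⧸ P) : Submodule.Quotient.mk x.out = x :=
  Quotient.out_eq x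

/-- If `V ⧸ Q` and `Q ⧸ P` are `w`-small, then so is `V ⧸ P`. -/
lemma small_quot_of_le (P Q : Submodule R V)
    [Small.{w} (V ⧸ Q)] [Small.{w} (Q ⧸ (P.comap Q.subtype))] :
    Small.{w} (V ⧸ P) := by
  have hsur : Function.Surjective (fun p : (V ⧸ Q) × (Q ⧸ (P.comap Q.subtype)) =>
      (P.mkQ (p.1.out + ((p.2.out : Q) : V)))) := by
    intro x
    obtain ⟨v, rfl⟩ := P.mkQ_surjective x
    have hq : v - (Q.mkQ v).out ∈ Q := by
      rw [← Submodule.Quotient.eq, my_mk_out, Submodule.mkQ_apply]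
    set z : Q ⧸ (P.comap Q.subtype) := Submodule.Quotient.mk ⟨v - (Q.mkQ v).out, hq⟩ with hz
    refine ⟨⟨Q.mkQ v, z⟩, ?_⟩
    have h3 : (z.out : Q) - ⟨v - (Q.mkQ v).out, hq⟩ ∈ P.comap Q.subtype := by
      rw [← Submodule.Quotient.eq, my_mk_out, hz]
    have h4 : ((z.out : Q) : V) - (v - (Q.mkQ v).out) ∈ P := h3
    show P.mkQ ((Q.mkQ v).out + ((z.out : Q) : V)) = P.mkQ v
    refine (Submodule.Quotient.eq P).mpr ?_
    have heq : (Q.mkQ v).out + ((z.out : Q) : V) - v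
        = ((z.out : Q) : V) - (v - (Q.mkQ v).out) := by abel
    rw [heq]; exact h4
  exact small_of_surjective hsur

/-- If `Q` is finitely generated and `c • Q ⊆ P`, with `R ⧸ c` small, then `Q ⧸ P` is small. -/
lemma small_sub_quot (c : Ideal R) [Small.{w} (R ⧸ c)] (Q P : Submodule R V) (hQ : Q.FG)
    (h : ∀ r ∈ c, ∀ q ∈ Q, r • q ∈ P) :
    Small.{w} (Q ⧸ (P.comap Q.subtype)) := by
  obtain ⟨k, s, hs⟩ := Submodule.fg_iff_exists_fin_generating_family.mp hQ
  have hsQ : ∀ j, s j ∈ Q := fun j => hs ▸ Submodule.subset_span (Set.mem_range_self j)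
  have hsur : Function.Surjective (fun wv : Fin k → R ⧸ c =>
      (Submodule.Quotient.mk
        (⟨∑ j, (wv j).out • s j, Submodule.sum_mem _ fun j _ => Q.smul_mem _ (hsQ j)⟩ : Q)
        : Q ⧸ (P.comap Q.subtype))) := by
    intro x
    obtain ⟨q, rfl⟩ := Submodule.Quotient.mk_surjective _ x
    have hq : (q : V) ∈ Submodule.span R (Set.range s) := hs ▸ q.2
    obtain ⟨b, hb⟩ := (Submodule.mem_span_range_iff_exists_fun R).mp hq
    refine ⟨fun j => Submodule.Quotient.mk (b j), ?_⟩
    rw [Submodule.Quotient.eq]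
    have hdiff : ∀ j, (Submodule.Quotient.mk (p := c) (b j)).out - b j ∈ c := by
      intro j
      rw [← Submodule.Quotient.eq, my_mk_out]
    show (∑ j, (Submodule.Quotient.mk (p := c) (b j)).out • s j) - (q : V) ∈ P
    have : (∑ j, (Submodule.Quotient.mk (p := c) (b j)).out • s j) - (q : V)
        = ∑ j, ((Submodule.Quotient.mk (p := c) (b j)).out - b j) • s j := by
      rw [← hb, ← Finset.sum_sub_distrib]
      congr 1; ext j; rw [sub_smul]
    rw [this]
    exact Submodule.sum_mem _ fun j _ => h _ (hdiff j) _ (hsQ j)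
  exact small_of_surjective hsur

lemma small_quot_pow_smul [IsNoetherianRing R] (c : Ideal R) [Small.{w} (R ⧸ c)] :
    ∀ n : ℕ, Small.{w} (R ⧸ (c ^ n • ⊤ : Submodule R R))
  | 0 => by
    have htop : (c ^ 0 • ⊤ : Submodule R R) = ⊤ := by
      rw [pow_zero, Ideal.one_eq_top, Submodule.top_smul]
    haveI : Subsingleton (R ⧸ (c ^ 0 • ⊤ : Submodule R R)) :=
      Submodule.Quotient.subsingleton_iff.mpr htop
    infer_instance
  | (n + 1) => by
    haveI := small_quot_pow_smul c n
    haveI : Small.{w} ((c ^ n • ⊤ : Submodule R R) ⧸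
        ((c ^ (n + 1) • ⊤ : Submodule R R).comap (c ^ n • ⊤ : Submodule R R).subtype)) := by
      refine small_sub_quot c _ _ (IsNoetherian.noetherian _) ?_
      intro r hr q hq
      have h1 : r • q ∈ c • (c ^ n • ⊤ : Submodule R R) := Submodule.smul_mem_smul hr hq
      rwa [pow_succ', ← Ideal.smul_eq_mul, Submodule.smul_assoc]
    exact small_quot_of_le (c ^ (n + 1) • ⊤) (c ^ n • ⊤)

lemma small_quot_iInf_pow [IsNoetherianRing R] (c : Ideal R) [Small.{w} (R ⧸ c)] :
    Small.{w} (R ⧸ (⨅ n : ℕ, c ^ n • ⊤ : Submodule R R)) := by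
  haveI : ∀ n : ℕ, Small.{w} (R ⧸ (c ^ n • ⊤ : Submodule R R)) := small_quot_pow_smul c
  have hinj : Function.Injective (fun (x : R ⧸ (⨅ n : ℕ, c ^ n • ⊤ : Submodule R R)) =>
      (fun n : ℕ => (Submodule.Quotient.mk x.out : R ⧸ (c ^ n • ⊤ : Submodule R R)))) := by
    intro x y hxy
    have h1 : x.out - y.out ∈ (⨅ n : ℕ, c ^ n • ⊤ : Submodule R R) := by
      rw [Submodule.mem_iInf]
      intro n
      rw [← Submodule.Quotient.eq]
      exact congrFun hxy n
    rw [← my_mk_out x, ← my_mk_out y, Submodule.Quotient.eq]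
    exact h1
  exact small_of_injective hinj

end SmallLemmas

section Main

universe u v

lemma fwd_aux (A : Type u) [CommRing A] [IsNoetherianRing A]
    (M : Type v) [AddCommGroup M] [Module A M] (inj : Module.Injective A M)
    (m : ℕ) (f : Fin m → A) (u : Fin m → M)
    (hrel : ∀ t : Fin m → A, ∑ i, t i * f i = 0 → ∑ i, t i • u i = 0) :
    ∃ v : M, ∀ i, f i • v = u i := by
  classical
  set N : Submodule A M := Submodule.span A (Set.range u) with hN
  have hu : ∀ i, u i ∈ N := fun i => Submodule.subset_span (Set.mem_range_self i)
  set c : Ideal A := N.annihilator with hc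
  -- `A ⧸ c` is `v`-small
  haveI hsmallc : Small.{v} (A ⧸ c) := by
    have hinj : Function.Injective (fun (x : A ⧸ c) => (fun i : Fin m => x.out • u i)) := by
      intro x y hxy
      have hmem : x.out - y.out ∈ c := by
        refine Submodule.mem_annihilator.mpr ?_
        intro n hn
        rw [hN] at hn
        induction hn using Submodule.span_induction with
        | mem z hz =>
          obtain ⟨i, rfl⟩ := hz
          rw [sub_smul, show x.out • u i = y.out • u i from congrFun hxy i, sub_self]
        | zero => rw [smul_zero]
        | add a b _ _ ha hb => rw [smul_add, ha, hb, add_zero]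
        | smul r a _ ha => rw [smul_comm, ha, smul_zero]
      rw [← my_mk_out x, ← my_mk_out y, Submodule.Quotient.eq]
      exact hmem
    exact small_of_injective hinj
  set c' : Submodule A A := (⨅ n : ℕ, c ^ n • ⊤) with hc'
  haveI hsmallc' : Small.{v} (A ⧸ c') := small_quot_iInf_pow c
  -- the auxiliary module
  set K : Submodule A (A × N) :=
    Submodule.span A (Set.range fun i => ((f i, -⟨u i, hu i⟩) : A × N)) with hK
  set W : Submodule A (A × N) := Submodule.prod c' (⊥ : Submodule A N) with hW
  set S : Submodule A (A × N) := K ⊔ W with hS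
  haveI hsmallY : Small.{v} ((A × N) ⧸ S) := by
    have hsur : Function.Surjective (fun p : (A ⧸ c') × N =>
        (Submodule.Quotient.mk ((p.1.out, p.2) : A × N) : (A × N) ⧸ S)) := by
      intro x
      obtain ⟨⟨a, n⟩, rfl⟩ := Submodule.Quotient.mk_surjective _ x
      refine ⟨⟨Submodule.Quotient.mk a, n⟩, ?_⟩
      rw [Submodule.Quotient.eq]
      refine Submodule.mem_sup_right (Submodule.mem_prod.mpr ⟨?_, by simp⟩)
      show (Submodule.Quotient.mk (p := c') a).out - a ∈ c'
      rw [← Submodule.Quotient.eq, my_mk_out]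
    exact small_of_surjective hsur
  set ι : N →ₗ[A] ((A × N) ⧸ S) := S.mkQ ∘ₗ LinearMap.inr A A N with hι
  have hιinj : Function.Injective ι := by
    rw [← LinearMap.ker_eq_bot, eq_bot_iff]
    intro n hn
    simp only [LinearMap.mem_ker, hι, LinearMap.comp_apply, LinearMap.inr_apply,
      Submodule.mkQ_apply, Submodule.Quotient.mk_eq_zero] at hn
    obtain ⟨k, hk, w, hw, hkw⟩ := Submodule.mem_sup.mp hn
    obtain ⟨t, ht⟩ := (Submodule.mem_span_range_iff_exists_fun A).mp hk
    obtain ⟨hw1, hw2⟩ := Submodule.mem_prod.mp hw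
    have hw2' : w.2 = 0 := hw2
    -- components
    have h1 : (∑ i, t i * f i) + w.1 = 0 := by
      have h := congrArg Prod.fst hkw
      simpa [← ht, Prod.fst_sum, smul_eq_mul] using h
    have h2 : (-(∑ i, t i • (⟨u i, hu i⟩ : N))) + w.2 = n := by
      have h := congrArg Prod.snd hkw
      simpa [← ht, Prod.snd_sum] using h
    -- Krull intersection
    have hw1' : w.1 ∈ (⨅ n : ℕ, c ^ n • ⊤ : Submodule A A) := hw1
    obtain ⟨r, hr⟩ := (Ideal.mem_iInf_smul_pow_eq_bot_iff c w.1).mp hw1'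
    have hzero : ∑ i, ((1 - (r : A)) * t i) * f i = 0 := by
      have hsum : (∑ i, t i * f i) = -w.1 := eq_neg_of_add_eq_zero_left h1
      have h5 : (1 - (r : A)) * w.1 = 0 := by
        rw [sub_mul, one_mul, ← smul_eq_mul, hr, sub_self]
      have h6 : (1 - (r : A)) * (∑ i, t i * f i) = 0 := by
        rw [hsum, mul_neg, h5, neg_zero]
      rw [← h6, Finset.mul_sum]
      exact Finset.sum_congr rfl fun i _ => by ring
    have hsum0 : ∑ i, ((1 - (r : A)) * t i) • u i = 0 := hrel _ hzero
    have hns : (1 - (r : A)) • (n : M) = 0 := by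
      have h2' : -(∑ i, t i • (⟨u i, hu i⟩ : N)) = n := by
        rw [hw2', add_zero] at h2; exact h2
      have hcoe : (n : M) = -(∑ i, t i • u i) := by
        rw [← h2']
        push_cast
        simp
      rw [hcoe, smul_neg, neg_eq_zero, Finset.smul_sum]
      calc ∑ i, (1 - (r : A)) • (t i • u i)
          = ∑ i, ((1 - (r : A)) * t i) • u i :=
            Finset.sum_congr rfl fun i _ => (mul_smul _ _ _).symm
        _ = 0 := hsum0
    have hrn : (r : A) • (n : M) = 0 := by
      exact Submodule.mem_annihilator.mp r.2 (n : M) n.2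
    have : (n : M) = 0 := by
      have h3 : (n : M) - (r : A) • (n : M) = 0 := by
        rw [sub_smul, one_smul] at hns
        exact hns
      rw [hrn, sub_zero] at h3
      exact h3
    exact Submodule.coe_eq_zero.mp this
  -- apply injectivity
  let eY := Shrink.linearEquiv.{v} A ((A × N) ⧸ S)
  obtain ⟨h, hh⟩ := inj.out (eY.symm.toLinearMap ∘ₗ ι)
    (eY.symm.injective.comp hιinj) N.subtype
  refine ⟨h (eY.symm (S.mkQ (1, 0))), ?_⟩
  intro i
  have e1 : f i • (((1 : A), (0 : N)) : A × N) = ((f i, 0) : A × N) := by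
    simp [Prod.smul_def, smul_eq_mul]
  have e2 : S.mkQ ((f i, 0) : A × N) = S.mkQ ((0 : A), (⟨u i, hu i⟩ : N)) := by
    rw [Submodule.mkQ_apply, Submodule.mkQ_apply, Submodule.Quotient.eq]
    refine Submodule.mem_sup_left (hK ▸ Submodule.subset_span ⟨i, ?_⟩)
    simp [Prod.ext_iff]
  calc f i • h (eY.symm (S.mkQ (1, 0)))
      = h (eY.symm (S.mkQ (f i • (((1 : A), (0 : N)) : A × N)))) := by
        rw [map_smul, map_smul, map_smul]
    _ = h (eY.symm (S.mkQ ((0 : A), (⟨u i, hu i⟩ : N)))) := by rw [e1, e2]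
    _ = u i := hh ⟨u i, hu i⟩

end Main


theorem stmt_0 (A : Type*) [CommRing A] [IsNoetherianRing A]
    (M : Type*) [AddCommGroup M] [Module A M] :
    Module.Injective A M ↔
      ∀ (m : ℕ) (f : Fin m → A) (u : Fin m → M),
        (∀ t : Fin m → A, ∑ i, t i * f i = 0 → ∑ i, t i • u i = 0) →
        ∃ v : M, ∀ i, f i • v = u i := by
  constructor
  · exact fun inj m f u hrel => fwd_aux A M inj m f u hrel
  · intro h
    refine Module.Baer.injective ?_
    intro I g
    obtain ⟨m, f, hspan⟩ :=
      Submodule.fg_iff_exists_fin_generating_family.mp (IsNoetherian.noetherian I)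
    have hfI : ∀ i, f i ∈ I := fun i => hspan ▸ Submodule.subset_span (Set.mem_range_self i)
    set u : Fin m → M := fun i => g ⟨f i, hfI i⟩ with hu
    have hcond : ∀ t : Fin m → A, ∑ i, t i * f i = 0 → ∑ i, t i • u i = 0 := by
      intro t ht
      have h1 : ∑ i, t i • u i = g (∑ i, t i • (⟨f i, hfI i⟩ : I)) := by
        rw [map_sum]
        exact Finset.sum_congr rfl fun i _ => (map_smul g _ _).symm
      have h2 : (∑ i, t i • (⟨f i, hfI i⟩ : I)) = 0 := by
        apply Subtype.ext
        push_cast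
        simpa [smul_eq_mul] using ht
      rw [h1, h2, map_zero]
    obtain ⟨v, hv⟩ := h m f u hcond
    refine ⟨LinearMap.toSpanSingleton A M v, ?_⟩
    intro x hx
    have hx' : x ∈ Submodule.span A (Set.range f) := by rw [hspan]; exact hx
    obtain ⟨t, ht⟩ := (Submodule.mem_span_range_iff_exists_fun A).mp hx'
    have hxI : (⟨x, hx⟩ : I) = ∑ i, t i • (⟨f i, hfI i⟩ : I) := by
      apply Subtype.ext
      push_cast
      simpa [smul_eq_mul] using ht.symm
    have hgx : g ⟨x, hx⟩ = ∑ i, t i • u i := by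
      rw [hxI, map_sum]
      exact Finset.sum_congr rfl fun i _ => map_smul g _ _
    have hxv : x • v = ∑ i, t i • u i := by
      rw [← ht, Finset.sum_smul]
      refine Finset.sum_congr rfl fun i _ => ?_
      rw [smul_eq_mul, mul_smul, hv i]
    show x • v = g ⟨x, hx⟩
    rw [hxv, hgx]
end

section
/- Let A be a commutative Noetherian ring and M an A-module such that for every ideal I of A generated by elements f_1,...,f_m and every choice of u_i in M with the compatibility property (∑ t_i f_i = 0 implies ∑ t_i u_i = 0 for all t_i in A), the system f_i v = u_i has a solution v in M. Then M is injective. -/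
theorem stmt_2 (A : Type*) [CommRing A] [IsNoetherianRing A]
    (M : Type*) [AddCommGroup M] [Module A M]
    (h : ∀ (m : ℕ) (f : Fin m → A) (u : Fin m → M),
        (∀ t : Fin m → A, ∑ i, t i * f i = 0 → ∑ i, t i • u i = 0) →
        ∃ v : M, ∀ i, f i • v = u i) :
    Module.Injective A M := by
  apply Module.Baer.injective
  intro I g
  obtain ⟨m, f, hf⟩ := Submodule.fg_iff_exists_fin_generating_family.mp
    (IsNoetherian.noetherian I)
  have hfI : ∀ i, f i ∈ I := fun i => hf ▸ Submodule.subset_span ⟨i, rfl⟩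
  set u : Fin m → M := fun i => g ⟨f i, hfI i⟩ with hu
  have hcompat : ∀ t : Fin m → A, ∑ i, t i * f i = 0 → ∑ i, t i • u i = 0 := by
    intro t ht
    have h1 : ∑ i, t i • u i = g (∑ i, t i • ⟨f i, hfI i⟩) := by
      rw [map_sum]; exact Finset.sum_congr rfl fun i _ => (map_smul g (t i) _).symm
    rw [h1]
    have h2 : (∑ i, t i • (⟨f i, hfI i⟩ : I)) = 0 := by
      ext
      simpa [smul_eq_mul] using ht
    rw [h2, map_zero]
  obtain ⟨v, hv⟩ := h m f u hcompat
  refine ⟨LinearMap.toSpanSingleton A M v, fun x hx => ?_⟩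
  simp only [LinearMap.toSpanSingleton_apply]
  have hx' : x ∈ Submodule.span A (Set.range f) := hf ▸ hx
  obtain ⟨c, rfl⟩ := (Finsupp.mem_span_range_iff_exists_finsupp).mp hx'
  have : (⟨(c.sum fun i a => a • f i), hx⟩ : I) =
      ∑ i ∈ c.support, c i • ⟨f i, hfI i⟩ := by
    ext
    simp [Finsupp.sum, Submodule.coe_sum, smul_eq_mul]
  rw [this, map_sum, Finsupp.sum, Finset.sum_smul]
  refine Finset.sum_congr rfl fun i _ => ?_
  rw [map_smul]
  show (c i * f i) • v = c i • u i
  rw [mul_smul, hv i]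
end

section
/- Let K ⊆ L be fields, V a K-vector space, W an L-vector space, and ι : V → W a K-linear injection. If for every finite tuple v_1,...,v_n from V the kernel of (x_1,...,x_n) ↦ ∑ x_i ι(v_i) in L^n is spanned by vectors with coordinates in K, then the canonical L-linear map L ⊗_K V → W is injective on the L-span of the image of V. -/
open TensorProduct

theorem stmt_4 (K L : Type*) [Field K] [Field L] [Algebra K L]
    (V : Type*) [AddCommGroup V] [Module K V]
    (W : Type*) [AddCommGroup W] [Module K W] [Module L W] [IsScalarTower K L W]
    (ι : V →ₗ[K] W) (hι : Function.Injective ι)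
    (h : ∀ (n : ℕ) (v : Fin n → V) (x : Fin n → L),
        ∑ i, x i • ι (v i) = 0 ↔
          x ∈ Submodule.span L
            ((fun y : Fin n → K => fun i => algebraMap K L (y i)) ''
              {y : Fin n → K | ∑ i, y i • v i = 0})) :
    Function.Injective (ι.liftBaseChange L : L ⊗[K] V →ₗ[L] W) := by
  rw [injective_iff_map_eq_zero]
  intro z hz
  obtain ⟨S, rfl⟩ := TensorProduct.exists_finset z
  set n := S.card with hn
  let e : Fin n ≃ S := (S.equivFin).symm
  set x : Fin n → L := fun i => ((e i : L × V)).1 with hx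
  set v : Fin n → V := fun i => ((e i : L × V)).2 with hv
  have hrep : ∑ p ∈ S, p.1 ⊗ₜ[K] p.2 = ∑ i, x i ⊗ₜ[K] v i := by
    rw [← Finset.sum_attach S (fun p => p.1 ⊗ₜ[K] p.2)]
    exact (Equiv.sum_comp e (fun p => ((p : L × V)).1 ⊗ₜ[K] ((p : L × V)).2)).symm
  rw [hrep] at hz ⊢
  have hz' : ∑ i, x i • ι (v i) = 0 := by
    rw [← hz, map_sum]
    simp [LinearMap.liftBaseChange_tmul]
  rw [h n v x] at hz'
  rw [Submodule.mem_span_set'] at hz'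
  obtain ⟨m, c, g, hg⟩ := hz'
  have : ∀ j : Fin m, ∃ y : Fin n → K,
      (∑ i, y i • v i = 0) ∧ (g j : Fin n → L) = fun i => algebraMap K L (y i) := by
    intro j
    obtain ⟨y, hy1, hy2⟩ := (g j).2
    exact ⟨y, hy1, hy2.symm⟩
  choose y hy1 hy2 using this
  have hxj : ∀ i, x i = ∑ j, c j * algebraMap K L (y j i) := by
    intro i
    rw [← hg]
    simp only [Finset.sum_apply, Pi.smul_apply, smul_eq_mul]
    exact Finset.sum_congr rfl fun j _ => by rw [hy2 j]
  calc ∑ i, x i ⊗ₜ[K] v i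
      = ∑ i, (∑ j, c j * algebraMap K L (y j i)) ⊗ₜ[K] v i := by
        exact Finset.sum_congr rfl fun i _ => by rw [hxj i]
    _ = ∑ j, c j • ∑ i, (algebraMap K L (y j i)) ⊗ₜ[K] v i := by
        simp_rw [sum_tmul, Finset.smul_sum, smul_tmul']
        rw [Finset.sum_comm]
        simp [smul_eq_mul]
    _ = ∑ j, c j • ((1 : L) ⊗ₜ[K] (∑ i, y j i • v i)) := by
        refine Finset.sum_congr rfl fun j _ => ?_
        congr 1
        rw [tmul_sum]
        refine Finset.sum_congr rfl fun i _ => ?_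
        rw [Algebra.algebraMap_eq_smul_one, smul_tmul]
    _ = 0 := by simp [hy1]
end

section
/- Let L be a field, 1 ≤ k ≤ n, and let ω be a nonzero element of the exterior power ⋀^k L^n that is decomposable (i.e., ω = w_1 ∧ ... ∧ w_k for some vectors w_i in an extension, equivalently ω lies in the image of the wedge map over some field extension). If ω ∈ ⋀^k L^n is the wedge of k vectors over an extension field of L, then ω is already the wedge of k vectors v_1,...,v_k ∈ L^n. -/
open ExteriorAlgebra Module
namespace WedgeAux
variable {K V : Type*} [Field K] [AddCommGroup V] [Module K V] {n : ℕ}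
def srt (S : Finset (Fin n)) : Fin S.card → Fin n := fun j => (S.orderIsoOfFin rfl j : Fin n)

noncomputable def coordA (b : Basis (Fin n) K V) (S : Finset (Fin n)) :
    V [⋀^Fin S.card]→ₗ[K] K :=
  ((Pi.basisFun K (Fin S.card)).det).compLinearMap (LinearMap.pi fun j => b.coord (srt S j))

lemma coordA_apply (b : Basis (Fin n) K V) (S : Finset (Fin n)) (u : Fin S.card → V) :
    coordA b S u = Matrix.det (Matrix.of fun i j => b.repr (u i) (srt S j)) := by
  simp only [coordA, AlternatingMap.compLinearMap_apply, Pi.basisFun_det,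
    Matrix.detRowAlternating]
  rfl

noncomputable def lam (b : Basis (Fin n) K V) (S : Finset (Fin n)) :
    ExteriorAlgebra K V →ₗ[K] K :=
  liftAlternating (fun i =>
    if h : i = S.card then (coordA b S).domDomCongr (finCongr h.symm) else 0)

lemma lam_ιMulti (b : Basis (Fin n) K V) (S : Finset (Fin n)) (m : ℕ) (u : Fin m → V) :
    lam b S (ιMulti K m u) =
      if h : m = S.card then coordA b S (u ∘ finCongr h.symm) else 0 := by
  rw [lam, liftAlternating_apply_ιMulti]
  split
  · rfl
  · rfl

end WedgeAux

namespace WedgeAux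
variable {K V : Type*} [Field K] [AddCommGroup V] [Module K V] {n : ℕ}

lemma srt_mem (S : Finset (Fin n)) (j : Fin S.card) : srt S j ∈ S :=
  (S.orderIsoOfFin rfl j).2

lemma srt_injective (S : Finset (Fin n)) : Function.Injective (srt S) := fun a b h => by
  apply (S.orderIsoOfFin rfl).injective
  exact Subtype.ext h

lemma srt_surj (S : Finset (Fin n)) {t : Fin n} (ht : t ∈ S) : ∃ j, srt S j = t := by
  obtain ⟨j, hj⟩ := (S.orderIsoOfFin rfl).surjective ⟨t, ht⟩
  exact ⟨j, congrArg Subtype.val hj⟩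

noncomputable def wB (b : Basis (Fin n) K V) (S : Finset (Fin n)) : ExteriorAlgebra K V :=
  ιMulti K S.card (fun j => b (srt S j))

lemma lam_wB (b : Basis (Fin n) K V) (S T : Finset (Fin n)) :
    lam b S (wB b T) = if S = T then 1 else 0 := by
  rw [wB, lam_ιMulti]
  split
  · rename_i h
    rw [coordA_apply]
    simp only [Function.comp_apply, Matrix.of_apply]
    by_cases hST : S = T
    · subst hST
      rw [if_pos rfl]
      have : (Matrix.of fun (i j : Fin S.card) =>
          (b.repr (b (srt S ((finCongr h.symm) i)))) (srt S j)) = 1 := by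
        ext i j
        have hcast : (finCongr h.symm) i = i := by apply Fin.ext; simp
        rw [Matrix.of_apply, hcast, Basis.repr_self_apply]
        by_cases hij : i = j
        · subst hij
          simp [Matrix.one_apply]
        · rw [if_neg (fun hc => hij (srt_injective S hc)), Matrix.one_apply_ne hij]
      rw [this, Matrix.det_one]
    · rw [if_neg hST]
      have hTS : ¬ T ⊆ S := by
        intro hsub
        exact hST (Finset.eq_of_subset_of_card_le hsub h.ge).symm
      obtain ⟨t, htT, htS⟩ := Finset.not_subset.mp hTS
      obtain ⟨i', hi'⟩ := srt_surj T htT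
      apply Matrix.det_eq_zero_of_row_eq_zero (finCongr h i')
      intro j
      simp only [Matrix.of_apply, Basis.repr_self_apply]
      rw [if_neg]
      intro hc
      apply htS
      have hcast : (finCongr h.symm) ((finCongr h) i') = i' := by apply Fin.ext; simp
      rw [hcast, hi'] at hc
      rw [hc]
      exact srt_mem S j
  · rename_i h
    rw [if_neg]
    rintro rfl
    exact h rfl

end WedgeAux

namespace WedgeAux
variable {K V : Type*} [Field K] [AddCommGroup V] [Module K V] {n : ℕ}

lemma srt_range (S : Finset (Fin n)) : Set.range (srt S) = ↑S := by
  ext t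
  constructor
  · rintro ⟨j, rfl⟩; exact srt_mem S j
  · intro ht; exact srt_surj S ht

lemma iMulti_cast {m m' : ℕ} (h : m = m') (v : Fin m' → V) :
    ιMulti K m (v ∘ finCongr h) = ιMulti K m' v := by
  subst h
  congr

lemma mul_wB_of_mem (b : Basis (Fin n) K V) {i : Fin n} {S : Finset (Fin n)} (hi : i ∈ S) :
    ι K (b i) * wB b S = 0 := by
  obtain ⟨j, rfl⟩ := srt_surj S hi
  rw [wB, ιMulti_apply]
  exact ι_mul_prod_list (fun j => b (srt S j)) j

lemma mul_wB_of_not_mem (b : Basis (Fin n) K V) {i : Fin n} {S : Finset (Fin n)} (hi : i ∉ S) :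
    ∃ c : K, (c = 1 ∨ c = -1) ∧ ι K (b i) * wB b S = c • wB b (insert i S) := by
  have hins : (insert i S).card = S.card + 1 := Finset.card_insert_of_notMem hi
  set g : Fin (S.card + 1) → Fin n := Fin.cons i (srt S) with hg
  have ginj : Function.Injective g := by
    apply Fin.cons_injective_of_injective
    · rw [srt_range]; exact hi
    · exact srt_injective S
  set h2 : Fin (S.card + 1) → Fin n := (srt (insert i S)) ∘ finCongr hins.symm with hh2
  have h2inj : Function.Injective h2 :=
    (srt_injective _).comp (finCongr hins.symm).injective
  have hrange : Set.range g = Set.range h2 := by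
    rw [hh2, Set.range_comp, Equiv.range_eq_univ, Set.image_univ, srt_range, hg,
      Fin.range_cons, srt_range, ← Finset.coe_insert]
  set σ : Equiv.Perm (Fin (S.card + 1)) :=
    (Equiv.ofInjective g ginj).trans ((Equiv.setCongr hrange).trans
      (Equiv.ofInjective h2 h2inj).symm) with hσ
  have hgh : ∀ j, h2 (σ j) = g j := by
    intro j
    rw [hσ]
    simp only [Equiv.trans_apply, Equiv.ofInjective_apply, Equiv.setCongr_apply]
    exact Equiv.apply_ofInjective_symm h2inj _
  have step1 : ι K (b i) * wB b S = ιMulti K (S.card + 1) (fun j => b (g j)) := by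
    have e0 : b (g 0) = b i := by rw [hg]; simp
    have et : Matrix.vecTail (fun j => b (g j)) = fun j => b (srt S j) := by
      funext j
      simp [Matrix.vecTail, hg, Function.comp]
    rw [ιMulti_succ_apply, e0, et, wB]
  have step2 : (fun j => b (g j)) = (fun j => b (h2 j)) ∘ σ := by
    funext j
    exact congrArg b (hgh j).symm
  have step3 : ιMulti K (S.card + 1) (fun j => b (h2 j)) = wB b (insert i S) := by
    rw [wB, ← iMulti_cast hins.symm (fun j => b (srt (insert i S) j))]
    rfl
  have step4 : ιMulti K (S.card + 1) ((fun j => b (h2 j)) ∘ σ) =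
      Equiv.Perm.sign σ • ιMulti K (S.card + 1) (fun j => b (h2 j)) :=
    AlternatingMap.map_perm (ιMulti K (S.card + 1)) _ σ
  rcases Int.units_eq_one_or (Equiv.Perm.sign σ) with hs | hs
  · refine ⟨1, Or.inl rfl, ?_⟩
    rw [step1, step2, step4, hs, one_smul, one_smul, step3]
  · refine ⟨-1, Or.inr rfl, ?_⟩
    rw [step1, step2, step4, hs, step3]
    rw [Units.smul_def]
    norm_num

end WedgeAux

namespace WedgeAux
variable {K V : Type*} [Field K] [AddCommGroup V] [Module K V] {n : ℕ}

lemma wB_empty (b : Basis (Fin n) K V) : wB b (∅ : Finset (Fin n)) = 1 := by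
  rw [wB]
  exact ιMulti_zero_apply _

lemma wB_singleton (b : Basis (Fin n) K V) (i : Fin n) : wB b {i} = ι K (b i) := by
  rw [wB]
  have hs : ∀ j : Fin ({i} : Finset (Fin n)).card, srt ({i} : Finset (Fin n)) j = i :=
    fun j => Finset.mem_singleton.mp (srt_mem _ j)
  show ιMulti K 1 (fun j => b (srt ({i} : Finset (Fin n)) j)) = ι K (b i)
  rw [ιMulti_succ_apply]
  simp [hs]
  exact congrArg b (hs _)

theorem mem_span_wB (b : Basis (Fin n) K V) (x : ExteriorAlgebra K V) :
    x ∈ Submodule.span K (Set.range (wB b)) := by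
  set P := Submodule.span K (Set.range (wB b)) with hP
  have h1 : (1 : ExteriorAlgebra K V) ∈ P := by
    rw [← wB_empty b]
    exact Submodule.subset_span (Set.mem_range_self _)
  have hι : ∀ m : V, ι K m ∈ P := by
    intro m
    rw [← Basis.sum_repr b m, map_sum]
    apply Submodule.sum_mem
    intro i _
    rw [map_smul]
    apply Submodule.smul_mem
    rw [← wB_singleton b i]
    exact Submodule.subset_span (Set.mem_range_self _)
  have hmul : ∀ m : V, ∀ y ∈ P, ι K m * y ∈ P := by
    intro m y hy
    refine Submodule.span_induction (p := fun y _ => ι K m * y ∈ P) ?_ ?_ ?_ ?_ hy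
    · rintro _ ⟨S, rfl⟩
      have hexp : ι K m * wB b S = ∑ i, b.repr m i • (ι K (b i) * wB b S) := by
        conv_lhs => rw [← Basis.sum_repr b m]
        rw [map_sum, Finset.sum_mul]
        simp [smul_mul_assoc]
      rw [hexp]
      apply Submodule.sum_mem
      intro i _
      apply Submodule.smul_mem
      by_cases hiS : i ∈ S
      · rw [mul_wB_of_mem b hiS]
        exact Submodule.zero_mem _
      · obtain ⟨c, _, hc⟩ := mul_wB_of_not_mem b hiS
        rw [hc]
        exact Submodule.smul_mem _ _ (Submodule.subset_span (Set.mem_range_self _))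
    · show ι K m * 0 ∈ P
      rw [mul_zero]; exact Submodule.zero_mem _
    · intro a c _ _ ha hc
      show ι K m * (a + c) ∈ P
      rw [mul_add]; exact Submodule.add_mem _ ha hc
    · intro a c _ hc
      show ι K m * (a • c) ∈ P
      rw [mul_smul_comm]; exact Submodule.smul_mem _ _ hc
  have main : ∀ x : ExteriorAlgebra K V, x ∈ P ∧ ∀ y ∈ P, x * y ∈ P := by
    intro x
    refine ExteriorAlgebra.induction ?_ ?_ ?_ ?_ x
    · intro r
      constructor
      · rw [Algebra.algebraMap_eq_smul_one]
        exact Submodule.smul_mem _ _ h1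
      · intro y hy
        rw [← Algebra.smul_def]
        exact Submodule.smul_mem _ _ hy
    · intro m
      exact ⟨hι m, fun y hy => hmul m y hy⟩
    · intro a c ha hc
      refine ⟨ha.2 c hc.1, fun y hy => ?_⟩
      rw [mul_assoc]
      exact ha.2 _ (hc.2 y hy)
    · intro a c ha hc
      exact ⟨Submodule.add_mem _ ha.1 hc.1, fun y hy => by
        rw [add_mul]; exact Submodule.add_mem _ (ha.2 y hy) (hc.2 y hy)⟩
  exact (main x).1

theorem eq_sum_lam (b : Basis (Fin n) K V) (x : ExteriorAlgebra K V) :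
    x = ∑ S : Finset (Fin n), lam b S x • wB b S := by
  classical
  let ℓ : ExteriorAlgebra K V →ₗ[K] ExteriorAlgebra K V :=
    ∑ S : Finset (Fin n), (LinearMap.toSpanSingleton K _ (wB b S)).comp (lam b S)
  have hℓ : ∀ y, ℓ y = ∑ S : Finset (Fin n), lam b S y • wB b S := by
    intro y
    simp [ℓ, LinearMap.sum_apply, LinearMap.toSpanSingleton_apply]
  suffices h : ℓ x = x by rw [← hℓ, h]
  have hx := mem_span_wB b x
  refine Submodule.span_induction (p := fun y _ => ℓ y = y) ?_ ?_ ?_ ?_ hx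
  · rintro _ ⟨T, rfl⟩
    rw [hℓ, Finset.sum_eq_single T]
    · rw [lam_wB, if_pos rfl, one_smul]
    · intro S _ hST
      rw [lam_wB, if_neg hST, zero_smul]
    · intro hT
      exact absurd (Finset.mem_univ T) hT
  · exact map_zero ℓ
  · intro a c _ _ ha hc
    rw [map_add, ha, hc]
  · intro a c _ hc
    rw [map_smul, hc]

lemma lam_eq_zero_of_mem_exteriorPower {k : ℕ} (b : Basis (Fin n) K V)
    {x : ExteriorAlgebra K V} (hx : x ∈ ⋀[K]^k V) {S : Finset (Fin n)} (hS : S.card ≠ k) :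
    lam b S x = 0 := by
  rw [← ιMulti_span_fixedDegree] at hx
  refine Submodule.span_induction (p := fun y _ => lam b S y = 0) ?_ ?_ ?_ ?_ hx
  · rintro _ ⟨u, rfl⟩
    rw [lam_ιMulti, dif_neg (fun hh => hS hh.symm)]
  · exact map_zero _
  · intro a c _ _ ha hc
    rw [map_add, ha, hc, add_zero]
  · intro a c _ hc
    rw [map_smul, hc, smul_zero]

end WedgeAux

namespace WedgeAux
variable {K V : Type*} [Field K] [AddCommGroup V] [Module K V] {n : ℕ}

theorem keylemma {k : ℕ} (b : Basis (Fin n) K V) (I : Finset (Fin n)) (hI : I.card = k)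
    {x : ExteriorAlgebra K V} (hx : x ∈ ⋀[K]^k V)
    (hann : ∀ i ∈ I, ι K (b i) * x = 0) :
    x = lam b I x • wB b I := by
  classical
  have hvanish : ∀ S : Finset (Fin n), S ≠ I → lam b S x = 0 := by
    intro S hSI
    by_cases hcard : S.card = k
    · have hns : ¬ I ⊆ S := by
        intro hsub
        exact hSI (Finset.eq_of_subset_of_card_le hsub (by rw [hI, hcard])).symm
      obtain ⟨i, hiI, hiS⟩ := Finset.not_subset.mp hns
      have h0 : (0 : ExteriorAlgebra K V) =
          ∑ T : Finset (Fin n), lam b T x • (ι K (b i) * wB b T) := by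
        calc (0 : ExteriorAlgebra K V) = ι K (b i) * x := (hann i hiI).symm
          _ = ι K (b i) * ∑ T : Finset (Fin n), lam b T x • wB b T := by
              conv_lhs => rw [eq_sum_lam b x]
          _ = ∑ T : Finset (Fin n), lam b T x • (ι K (b i) * wB b T) := by
              rw [Finset.mul_sum]
              simp [mul_smul_comm]
      have h1 := congrArg (lam b (insert i S)) h0
      rw [map_zero, map_sum] at h1
      obtain ⟨c, hc1, hc⟩ := mul_wB_of_not_mem b hiS
      have hsum : ∑ T : Finset (Fin n),
          lam b (insert i S) (lam b T x • (ι K (b i) * wB b T)) = lam b S x * c := by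
        rw [Finset.sum_eq_single S]
        · rw [hc, map_smul, map_smul, lam_wB, if_pos rfl, smul_eq_mul, smul_eq_mul, mul_one]
        · intro T _ hTS
          rw [map_smul, smul_eq_mul]
          by_cases hiT : i ∈ T
          · rw [mul_wB_of_mem b hiT, map_zero, mul_zero]
          · obtain ⟨d, _, hd⟩ := mul_wB_of_not_mem b hiT
            rw [hd, map_smul, lam_wB, if_neg, smul_zero, mul_zero]
            intro he
            apply hTS
            have : S = T := by
              have h1 := congrArg (Finset.erase · i) he
              simpa [Finset.erase_insert hiS, Finset.erase_insert hiT] using h1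
            exact this.symm
        · intro hS
          exact absurd (Finset.mem_univ S) hS
      rw [hsum] at h1
      have hcne : c ≠ 0 := by
        rcases hc1 with rfl | rfl
        · exact one_ne_zero
        · exact neg_ne_zero.mpr one_ne_zero
      exact (mul_eq_zero.mp h1.symm).resolve_right hcne
    · exact lam_eq_zero_of_mem_exteriorPower b hx hcard
  conv_lhs => rw [eq_sum_lam b x]
  rw [Finset.sum_eq_single I]
  · intro S _ hSI
    rw [hvanish S hSI, zero_smul]
  · intro h
    exact absurd (Finset.mem_univ I) h

end WedgeAux
set_option maxHeartbeats 1600000 in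
set_option synthInstance.maxHeartbeats 400000 in
theorem stmt_6 (L : Type*) [Field L] (k n : ℕ) (hk : 1 ≤ k) (hkn : k ≤ n)
    (L' : Type*) [Field L'] [Algebra L L']
    (F : ExteriorAlgebra L (Fin n → L) →+* ExteriorAlgebra L' (Fin n → L'))
    (hFι : ∀ x : Fin n → L,
      F (ExteriorAlgebra.ι L x) = ExteriorAlgebra.ι L' (fun i => algebraMap L L' (x i)))
    (hFc : ∀ c : L, F (algebraMap L _ c) = algebraMap L' _ (algebraMap L L' c))
    (ω : ExteriorAlgebra L (Fin n → L)) (hω : ω ≠ 0)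
    (hdec : ∃ w : Fin k → (Fin n → L'), F ω = ExteriorAlgebra.ιMulti L' k w) :
    ∃ v : Fin k → (Fin n → L), ω = ExteriorAlgebra.ιMulti L k v := by
  classical
  obtain ⟨w, hw⟩ := hdec
  set b : Basis (Fin n) L (Fin n → L) := Pi.basisFun L (Fin n) with hb
  set b' : Basis (Fin n) L' (Fin n → L') := Pi.basisFun L' (Fin n) with hb'
  set f : L →+* L' := algebraMap L L' with hf
  have hfinj : Function.Injective f := f.injective
  -- semilinearity of F
  have hFsmul : ∀ (c : L) (x), F (c • x) = f c • F x := by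
    intro c x
    rw [Algebra.smul_def, map_mul, hFc, ← Algebra.smul_def]
  -- F maps basis wedges to basis wedges
  have hFb : ∀ s : Fin n, F (ExteriorAlgebra.ι L (b s)) = ExteriorAlgebra.ι L' (b' s) := by
    intro s
    rw [hFι]
    congr 1
    funext i
    rw [hb, hb']
    simp only [Pi.basisFun_apply]
    by_cases his : i = s
    · subst his; simp
    · simp [Pi.single_apply, his]
  have hFwB : ∀ S : Finset (Fin n), F (WedgeAux.wB b S) = WedgeAux.wB b' S := by
    intro S
    rw [WedgeAux.wB, WedgeAux.wB, ExteriorAlgebra.ιMulti_apply, ExteriorAlgebra.ιMulti_apply,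
      map_list_prod, List.map_ofFn]
    congr 1
    exact congrArg List.ofFn (funext fun j => hFb _)
  -- compatibility of coordinates
  have hlam : ∀ (S : Finset (Fin n)) (x), WedgeAux.lam b' S (F x) = f (WedgeAux.lam b S x) := by
    intro S x
    conv_lhs => rw [WedgeAux.eq_sum_lam b x]
    rw [map_sum, map_sum]
    have : ∀ T : Finset (Fin n),
        WedgeAux.lam b' S (F (WedgeAux.lam b T x • WedgeAux.wB b T)) =
          if S = T then f (WedgeAux.lam b T x) else 0 := by
      intro T
      rw [hFsmul, map_smul, hFwB, WedgeAux.lam_wB, smul_eq_mul, mul_ite, mul_one, mul_zero]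
    simp only [this]
    rw [Finset.sum_ite_eq, if_pos (Finset.mem_univ S)]
  -- coefficients of degree ≠ k vanish
  have hcoeff0 : ∀ S : Finset (Fin n), S.card ≠ k → WedgeAux.lam b S ω = 0 := by
    intro S hS
    apply hfinj
    rw [map_zero, ← hlam, hw]
    exact WedgeAux.lam_eq_zero_of_mem_exteriorPower b'
      (ExteriorAlgebra.ιMulti_range L' k (Set.mem_range_self w)) hS
  have hωpow : ω ∈ ⋀[L]^k (Fin n → L) := by
    rw [WedgeAux.eq_sum_lam b ω]
    apply Submodule.sum_mem
    intro S _
    by_cases hS : S.card = k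
    · apply Submodule.smul_mem
      have h2 : WedgeAux.wB b S ∈ ⋀[L]^(S.card) (Fin n → L) :=
        ExteriorAlgebra.ιMulti_range L S.card (Set.mem_range_self _)
      rwa [hS] at h2
    · rw [hcoeff0 S hS, zero_smul]
      exact Submodule.zero_mem _
  -- F ω ≠ 0, hence w is linearly independent
  have hFω : F ω ≠ 0 := by
    intro h0
    apply hω
    rw [WedgeAux.eq_sum_lam b ω]
    apply Finset.sum_eq_zero
    intro S _
    have hz : WedgeAux.lam b S ω = 0 := by
      apply hfinj
      rw [map_zero, ← hlam, h0, map_zero]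
    rw [hz, zero_smul]
  have hwli : LinearIndependent L' w := by
    by_contra hdep
    exact hFω (by rw [hw]; exact AlternatingMap.map_linearDependent _ w hdep)
  -- the annihilator maps
  set Tm : (Fin n → L) →ₗ[L] ExteriorAlgebra L (Fin n → L) :=
    (LinearMap.mulRight L ω).comp (ExteriorAlgebra.ι L) with hTmdef
  set Tm' : (Fin n → L') →ₗ[L'] ExteriorAlgebra L' (Fin n → L') :=
    (LinearMap.mulRight L' (F ω)).comp (ExteriorAlgebra.ι L') with hTmdef'
  have hTm : ∀ v, Tm v = ExteriorAlgebra.ι L v * ω := fun v => rfl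
  have hTm' : ∀ v, Tm' v = ExteriorAlgebra.ι L' v * F ω := fun v => rfl
  have hwker : ∀ j, w j ∈ LinearMap.ker Tm' := by
    intro j
    rw [LinearMap.mem_ker, hTm', hw, ExteriorAlgebra.ιMulti_apply]
    exact ExteriorAlgebra.ι_mul_prod_list w j
  have hker' : k ≤ Module.finrank L' (LinearMap.ker Tm') := by
    have hspan : Submodule.span L' (Set.range w) ≤ LinearMap.ker Tm' :=
      Submodule.span_le.mpr (by rintro _ ⟨j, rfl⟩; exact hwker j)
    have h1 : Module.finrank L' (Submodule.span L' (Set.range w)) = k := by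
      rw [finrank_span_eq_card hwli, Fintype.card_fin]
    rw [← h1]
    exact Submodule.finrank_mono hspan
  -- rank comparison
  have hrange_le : Module.finrank L (LinearMap.range Tm) ≤
      Module.finrank L' (LinearMap.range Tm') := by
    set r := Module.finrank L (LinearMap.range Tm) with hr
    let cb : Basis (Fin r) L (LinearMap.range Tm) := Module.finBasis L _
    have hpre : ∀ j : Fin r, ∃ x : Fin n → L,
        Tm x = (cb j : ExteriorAlgebra L (Fin n → L)) := fun j => (cb j).2
    choose xs hxs using hpre
    have hyli : LinearIndependent L
        (fun j => (cb j : ExteriorAlgebra L (Fin n → L))) :=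
      cb.linearIndependent.map' (LinearMap.range Tm).subtype (Submodule.ker_subtype _)
    set C : Matrix (Finset (Fin n)) (Fin r) L :=
      Matrix.of (fun S j => WedgeAux.lam b S (cb j : ExteriorAlgebra L (Fin n → L))) with hC
    have hCker : LinearMap.ker (Matrix.mulVecLin C) = ⊥ := by
      rw [LinearMap.ker_eq_bot']
      intro μ hμ
      have hsum : ∑ j, μ j • (cb j : ExteriorAlgebra L (Fin n → L)) = 0 := by
        set z := ∑ j, μ j • (cb j : ExteriorAlgebra L (Fin n → L)) with hz
        have hzS : ∀ S, WedgeAux.lam b S z = 0 := by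
          intro S
          have h2 := congrFun hμ S
          rw [hz, map_sum]
          simp only [map_smul, smul_eq_mul]
          simpa [Matrix.mulVecLin_apply, Matrix.mulVec, dotProduct, hC,
            mul_comm] using h2
        rw [WedgeAux.eq_sum_lam b z]
        apply Finset.sum_eq_zero
        intro S _
        rw [hzS S, zero_smul]
      have := Fintype.linearIndependent_iff.mp hyli μ hsum
      funext j
      exact this j
    obtain ⟨g, hg⟩ := LinearMap.exists_leftInverse_of_injective (Matrix.mulVecLin C) hCker
    set B := LinearMap.toMatrix' g with hB
    have hBC : B * C = 1 := by
      have h2 : LinearMap.toMatrix' (g.comp (Matrix.mulVecLin C)) = B * C := by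
        rw [← Matrix.toLin'_apply', LinearMap.toMatrix'_comp, LinearMap.toMatrix'_toLin']
      rw [← h2, hg, LinearMap.toMatrix'_id]
    have hFyli : LinearIndependent L'
        (fun j => F (cb j : ExteriorAlgebra L (Fin n → L))) := by
      rw [Fintype.linearIndependent_iff]
      intro μ hμ
      have hcm : (C.map f).mulVec μ = 0 := by
        funext S
        have h2 := congrArg (WedgeAux.lam b' S) hμ
        rw [map_sum, map_zero] at h2
        simp only [map_smul, smul_eq_mul, hlam] at h2
        simpa [Matrix.mulVec, dotProduct, Matrix.map_apply, hC, mul_comm] using h2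
      have h3 : (B.map f).mulVec ((C.map f).mulVec μ) = μ := by
        rw [Matrix.mulVec_mulVec, ← Matrix.map_mul, hBC,
          Matrix.map_one f (map_zero f) (map_one f), Matrix.one_mulVec]
      rw [hcm, Matrix.mulVec_zero] at h3
      intro j
      rw [← h3]
      rfl
    have hFyrange : ∀ j, F (cb j : ExteriorAlgebra L (Fin n → L)) ∈ LinearMap.range Tm' := by
      intro j
      refine ⟨fun i => f (xs j i), ?_⟩
      rw [hTm', ← hFι, ← map_mul, ← hTm, hxs j]
    let u : Fin r → LinearMap.range Tm' := fun j => ⟨_, hFyrange j⟩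
    have huli : LinearIndependent L' u := by
      apply LinearIndependent.of_comp (LinearMap.range Tm').subtype
      exact hFyli
    have := huli.fintype_card_le_finrank
    rwa [Fintype.card_fin] at this
  -- dimension of the kernel over L
  have hfinL : Module.finrank L (Fin n → L) = n := by
    rw [Module.finrank_fintype_fun_eq_card, Fintype.card_fin]
  have hfinL' : Module.finrank L' (Fin n → L') = n := by
    rw [Module.finrank_fintype_fun_eq_card, Fintype.card_fin]
  have hrn : Module.finrank L (LinearMap.range Tm) +
      Module.finrank L (LinearMap.ker Tm) = n := by
    rw [LinearMap.finrank_range_add_finrank_ker, hfinL]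
  have hrn' : Module.finrank L' (LinearMap.range Tm') +
      Module.finrank L' (LinearMap.ker Tm') = n := by
    rw [LinearMap.finrank_range_add_finrank_ker, hfinL']
  have hkerL : k ≤ Module.finrank L (LinearMap.ker Tm) := by omega
  -- pick k independent vectors in the kernel
  set d := Module.finrank L (LinearMap.ker Tm) with hd
  let kb : Basis (Fin d) L (LinearMap.ker Tm) := Module.finBasis L _
  set v0 : Fin k → (Fin n → L) :=
    fun j => (kb (Fin.castLE hkerL j) : Fin n → L) with hv0
  have hv0li : LinearIndependent L v0 := by
    have h1 : LinearIndependent L (fun j : Fin d => (kb j : Fin n → L)) :=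
      kb.linearIndependent.map' (LinearMap.ker Tm).subtype (Submodule.ker_subtype _)
    exact h1.comp (Fin.castLE hkerL) ((Fin.strictMono_castLE hkerL).injective)
  have hv0ker : ∀ j, ExteriorAlgebra.ι L (v0 j) * ω = 0 := by
    intro j
    have := (kb (Fin.castLE hkerL j)).2
    rw [LinearMap.mem_ker, hTm] at this
    exact this
  -- extend to a basis
  have hsub : LinearIndepOn L id (Set.range v0) :=
    (linearIndepOn_id_range_iff hv0li.injective).mpr hv0li
  let bB : Basis (hsub.extend (Set.subset_univ _)) L (Fin n → L) := Basis.extend hsub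
  haveI : Fintype (hsub.extend (Set.subset_univ _)) := FiniteDimensional.fintypeBasisIndex bB
  have hcard : Fintype.card (hsub.extend (Set.subset_univ _)) = n := by
    rw [← Module.finrank_eq_card_basis bB, hfinL]
  let e : (hsub.extend (Set.subset_univ _)) ≃ Fin n := Fintype.equivFinOfCardEq hcard
  set b2 : Basis (Fin n) L (Fin n → L) := bB.reindex e with hb2
  have hmemBs : ∀ j, v0 j ∈ hsub.extend (Set.subset_univ _) :=
    fun j => hsub.subset_extend _ (Set.mem_range_self j)
  set gi : Fin k → Fin n := fun j => e ⟨v0 j, hmemBs j⟩ with hgi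
  have hgiinj : Function.Injective gi := by
    intro a c h
    apply hv0li.injective
    exact Subtype.mk_eq_mk.mp (e.injective h)
  set I : Finset (Fin n) := Finset.image gi Finset.univ with hI
  have hIcard : I.card = k := by
    rw [hI, Finset.card_image_of_injective _ hgiinj, Finset.card_univ, Fintype.card_fin]
  have hb2ann : ∀ i ∈ I, ExteriorAlgebra.ι L (b2 i) * ω = 0 := by
    intro i hi
    obtain ⟨j, _, rfl⟩ := Finset.mem_image.mp hi
    have hbv : b2 (gi j) = v0 j := by
      rw [hb2, Basis.reindex_apply, hgi]
      rw [Equiv.symm_apply_apply]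
      exact Basis.extend_apply_self hsub _
    rw [hbv]
    exact hv0ker j
  -- conclude with the key lemma
  have hkey := WedgeAux.keylemma b2 I hIcard hωpow hb2ann
  set c := WedgeAux.lam b2 I ω with hc
  set u : Fin k → (Fin n → L) :=
    (fun j => b2 (WedgeAux.srt I j)) ∘ finCongr hIcard.symm with hu
  have huw : ExteriorAlgebra.ιMulti L k u = WedgeAux.wB b2 I :=
    WedgeAux.iMulti_cast hIcard.symm _
  have h0k : 0 < k := hk
  refine ⟨Function.update u ⟨0, h0k⟩ (c • u ⟨0, h0k⟩), ?_⟩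
  rw [hkey]
  rw [AlternatingMap.map_update_smul, Function.update_eq_self, huw]
end

section
/- Let K be a field of characteristic 0 and y ∈ K. Suppose v ∈ K[T] is nonzero, v(0) = 0, and for every x ∈ K, v(x) = 0 implies x = y or v(x+1) = 0. Then y is a natural number (i.e., y = n·1 for some n ∈ ℕ). -/
open Polynomial

theorem stmt_12 (K : Type*) [Field K] [CharZero K] (y : K) (v : K[X])
    (hv : v ≠ 0) (h0 : v.eval 0 = 0)
    (h : ∀ x : K, v.eval x = 0 → x = y ∨ v.eval (x + 1) = 0) :
    ∃ n : ℕ, y = (n : K) := by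
  by_contra hc
  push_neg at hc
  have key : ∀ n : ℕ, v.eval (n : K) = 0 := by
    intro n
    induction n with
    | zero => simpa using h0
    | succ k ih =>
      rcases h _ ih with h1 | h2
      · exact absurd h1.symm (hc k)
      · push_cast
        exact h2
  apply hv
  apply Polynomial.eq_zero_of_infinite_isRoot
  apply Set.infinite_of_injective_forall_mem (f := fun n : ℕ => (n : K))
  · exact Nat.cast_injective
  · intro n; exact key n
end

section
/- Let A be a commutative ring, M an A-module, U ⊆ M a submodule generated by u_1,...,u_m, and f_1,...,f_m ∈ A such that for all t_1,...,t_m ∈ A, ∑ t_i f_i = 0 implies ∑ t_i u_i = 0. Let V = (U ⊕ A)/N where N is the submodule generated by the elements (−u_i, f_i) for i = 1,...,m. Then the natural map U → V, u ↦ class of (u, 0), is injective. -/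
theorem stmt_16 (A : Type*) [CommRing A] (M : Type*) [AddCommGroup M] [Module A M]
    (m : ℕ) (u : Fin m → M) (f : Fin m → A)
    (h : ∀ t : Fin m → A, ∑ i, t i * f i = 0 → ∑ i, t i • u i = 0)
    (U : Submodule A M) (hU : U = Submodule.span A (Set.range u))
    (hu : ∀ i, u i ∈ U)
    (N : Submodule A (U × A))
    (hN : N = Submodule.span A (Set.range (fun i => ((-(⟨u i, hu i⟩ : U), f i) : U × A)))) :
    Function.Injective
      (fun x : U => (Submodule.Quotient.mk ((x, 0) : U × A) : (U × A) ⧸ N)) := by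
  intro x y hxy
  simp only [Submodule.Quotient.eq] at hxy
  rw [hN, Submodule.mem_span_range_iff_exists_fun A] at hxy
  obtain ⟨c, hc⟩ := hxy
  have h1 : (∑ i, c i • ((-(⟨u i, hu i⟩ : U), f i) : U × A)).1 = x - y := by
    rw [hc]; simp
  have h2 : (∑ i, c i • ((-(⟨u i, hu i⟩ : U), f i) : U × A)).2 = 0 := by
    rw [hc]; simp
  simp only [Prod.snd_sum, Prod.smul_mk, smul_eq_mul] at h2
  have hf := h c h2
  simp only [Prod.fst_sum, Prod.smul_mk, smul_neg] at h1
  have hz : ((x - y : U) : M) = 0 := by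
    rw [← h1]
    push_cast
    simp only [Finset.sum_neg_distrib]
    simpa using hf
  have : (x - y : U) = 0 := Subtype.ext hz
  exact sub_eq_zero.mp this
end
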